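/- Let A : E → E be a bounded self-adjoint operator on a Hilbert space E of the form A = I − K with K compact. Suppose there is a constant c > 0 such that ⟨Av, v⟩ ≥ c‖v‖² for all v in a closed subspace Y ⊂ E, and ⟨Az, z⟩ ≤ −c‖z‖² for some z with E = Y ⊕ span{z} orthogonally. Then A is invertible with ‖A^{-1}‖ ≤ C for a constant C depending only on c and ‖A‖. -/

import Mathlib

open RealInnerProductSpace

/-- Uniform invertibility of a compact perturbation of the identity whose quadratic form
is negative definite on the line spanned by `z` and coercive on its orthogonal complement. -/
theorem stmt14 (c M : ℝ) (hc : 0 < c) (hM : 0 < M) :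
    ∃ C > (0:ℝ), ∀ (E : Type) (_ : NormedAddCommGroup E), ∀ (_ : InnerProductSpace ℝ E),
      ∀ (_ : CompleteSpace E), ∀ (A K : E →L[ℝ] E),
      IsSelfAdjoint A → A = 1 - K → IsCompactOperator K → ‖A‖ ≤ M →
      ∀ z : E, z ≠ 0 →
        (∀ v ∈ (ℝ ∙ z)ᗮ, c * ‖v‖ ^ 2 ≤ ⟪A v, v⟫) →
        (⟪A z, z⟫ ≤ -c * ‖z‖ ^ 2) →
        ∃ B : E →L[ℝ] E, A.comp B = ContinuousLinearMap.id ℝ E ∧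
          B.comp A = ContinuousLinearMap.id ℝ E ∧ ‖B‖ ≤ C := by
  refine ⟨c⁻¹, by positivity, ?_⟩
  intro E _ _ _ A K hA hAK hK hAM z hz hY hzz
  have hsym : ∀ x y : E, ⟪A x, y⟫ = ⟪x, A y⟫ :=
    (ContinuousLinearMap.isSelfAdjoint_iff_isSymmetric.mp hA)
  -- Key lower bound: `c * ‖v‖ ≤ ‖A v‖`.
  have key : ∀ v : E, c * ‖v‖ ≤ ‖A v‖ := by
    intro v
    obtain ⟨p, hp, y, hy, hv⟩ := (ℝ ∙ z).exists_add_mem_mem_orthogonal v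
    obtain ⟨t, rfl⟩ := Submodule.mem_span_singleton.mp hp
    have hyz : ⟪t • z, y⟫ = 0 :=
      (Submodule.mem_orthogonal _ _).mp hy _ (Submodule.smul_mem _ t
        (Submodule.mem_span_singleton_self z))
    -- norms
    have hnv : ‖v‖ ^ 2 = ‖t • z‖ ^ 2 + ‖y‖ ^ 2 := by
      rw [hv, norm_add_sq_real, hyz]; ring
    have hnw : ‖y - t • z‖ ^ 2 = ‖v‖ ^ 2 := by
      have hyz' : ⟪y, t • z⟫ = (0:ℝ) := by rw [real_inner_comm]; exact hyz
      rw [hnv, norm_sub_sq_real, hyz']; ring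
    -- quadratic form estimate against the reflected vector `w = y - t • z`
    have hcross : ⟪A (t • z), y⟫ = ⟪A y, t • z⟫ := by
      rw [hsym (t • z) y, real_inner_comm]
    have hq : c * ‖v‖ ^ 2 ≤ ⟪A v, y - t • z⟫ := by
      have h1 : c * ‖y‖ ^ 2 ≤ ⟪A y, y⟫ := hY y hy
      have h2 : ⟪A (t • z), t • z⟫ ≤ -c * ‖t • z‖ ^ 2 := by
        have : ⟪A (t • z), t • z⟫ = t ^ 2 * ⟪A z, z⟫ := by
          simp [map_smul, inner_smul_left, inner_smul_right]; ring
        rw [this, norm_smul]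
        have := mul_le_mul_of_nonneg_left hzz (sq_nonneg t)
        calc t ^ 2 * ⟪A z, z⟫ ≤ t ^ 2 * (-c * ‖z‖ ^ 2) := this
          _ = -c * (‖t‖ * ‖z‖) ^ 2 := by rw [Real.norm_eq_abs, ← sq_abs t]; ring
      have hexp : ⟪A v, y - t • z⟫ = ⟪A y, y⟫ - ⟪A (t • z), t • z⟫ := by
        rw [hv, map_add, inner_add_left, inner_sub_right, inner_sub_right, hcross]
        ring
      rw [hexp, hnv]
      nlinarith [h1, h2]
    have hcs : ⟪A v, y - t • z⟫ ≤ ‖A v‖ * ‖v‖ := by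
      have := real_inner_le_norm (A v) (y - t • z)
      have hw : ‖y - t • z‖ = ‖v‖ := by
        have := hnw
        nlinarith [norm_nonneg (y - t • z), norm_nonneg v]
      rwa [hw] at this
    rcases eq_or_ne v 0 with rfl | hv0
    · simp
    · have hvpos : 0 < ‖v‖ := norm_pos_iff.mpr hv0
      have : c * ‖v‖ ^ 2 ≤ ‖A v‖ * ‖v‖ := le_trans hq hcs
      nlinarith
  -- Antilipschitz
  have hcn : (0 : NNReal) < ⟨c, hc.le⟩ := by exact_mod_cast hc
  have h_anti : AntilipschitzWith (⟨c, hc.le⟩ : NNReal)⁻¹ A := by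
    refine A.antilipschitz_of_bound fun x => ?_
    have := key x
    change ‖x‖ ≤ c⁻¹ * ‖A x‖
    rw [inv_mul_eq_div, le_div_iff₀ hc]
    linarith [key x]
  -- Bijectivity
  have hbij : Function.Bijective A := by
    rw [A.bijective_iff_dense_range_and_antilipschitz]
    refine ⟨?_, ⟨_, h_anti⟩⟩
    have _inst := h_anti.completeSpace_range_clm
    rw [Submodule.topologicalClosure_eq_top_iff, Submodule.eq_bot_iff]
    intro x hx
    have hAx : A x = 0 := by
      have h0 : ⟪A (A x), x⟫ = 0 := hx (A (A x)) ⟨A x, rfl⟩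
      have : ⟪A x, A x⟫ = 0 := by rw [← hsym (A x) x]; exact h0
      exact inner_self_eq_zero.mp this
    have := key x
    rw [hAx, norm_zero] at this
    have : ‖x‖ ≤ 0 := by nlinarith
    exact norm_eq_zero.mp (le_antisymm this (norm_nonneg x))
  -- Build the inverse
  let e : E ≃L[ℝ] E := ContinuousLinearEquiv.ofBijective A
    (LinearMap.ker_eq_bot_of_injective hbij.injective)
    (LinearMap.range_eq_top.mpr hbij.surjective)
  have hAe : ∀ u : E, A (e.symm u) = u := fun u => e.apply_symm_apply u
  have heA : ∀ u : E, e.symm (A u) = u := fun u => e.symm_apply_apply u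
  refine ⟨(e.symm : E →L[ℝ] E), ?_, ?_, ?_⟩
  · ext x; simpa using hAe x
  · ext x; simpa using heA x
  · refine ContinuousLinearMap.opNorm_le_bound _ (by positivity) fun x => ?_
    have h2 := key (e.symm x)
    rw [hAe x] at h2
    have h3 := mul_le_mul_of_nonneg_left h2 (inv_nonneg.mpr hc.le)
    rw [← mul_assoc, inv_mul_cancel₀ hc.ne', one_mul] at h3
    simpa using h3
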